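/- arXiv:1806.08098 — 3 statements merged into one kernel-verified Lean document; each statement's English description precedes it below -/
import Mathlib

section
/- Let f : ℕ → ℂ be almost periodic and bounded. Then limsup_{n→∞} |f(n)| = sup_{n ∈ ℕ} |f(n)|. -/
/-- A function `f : ℕ → ℂ` of an integer variable is almost periodic: for every `ε > 0`
there is `N ≥ 1` such that among any `N` consecutive non-negative integers there is a `p`
with `|f (n + p) - f n| < ε` for all `n`. -/
def AlmostPeriodicNat (f : ℕ → ℂ) : Prop :=
  ∀ ε : ℝ, 0 < ε → ∃ N : ℕ, 1 ≤ N ∧ ∀ m : ℕ, ∃ p : ℕ,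
    m ≤ p ∧ p < m + N ∧ ∀ n : ℕ, ‖f (n + p) - f n‖ < ε

/-- For a bounded almost periodic `f : ℕ → ℂ`, the limsup of `|f n|` equals its
supremum. -/
theorem almost_periodic_limsup_eq_sup (f : ℕ → ℂ)
    (hf : AlmostPeriodicNat f) (hbd : ∃ M : ℝ, ∀ n : ℕ, ‖f n‖ ≤ M) :
    Filter.limsup (fun n : ℕ => ‖f n‖) Filter.atTop =
      ⨆ n : ℕ, ‖f n‖ := by
  obtain ⟨M, hM⟩ := hbd
  have hbdd : BddAbove (Set.range fun n : ℕ => ‖f n‖) :=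
    ⟨M, by rintro x ⟨n, rfl⟩; exact hM n⟩
  have hbu : Filter.IsBoundedUnder (· ≤ ·) Filter.atTop
      (fun n : ℕ => ‖f n‖) :=
    Filter.isBoundedUnder_of ⟨M, hM⟩
  have hcb : Filter.IsCoboundedUnder (· ≤ ·) Filter.atTop
      (fun n : ℕ => ‖f n‖) :=
    Filter.IsBoundedUnder.isCoboundedUnder_le
      (Filter.isBoundedUnder_of ⟨0, fun n => norm_nonneg (f n)⟩)
  apply le_antisymm
  · exact Filter.limsup_le_of_le hcb (Filter.Eventually.of_forall fun n =>
      le_ciSup hbdd n)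
  · apply ciSup_le
    intro m
    refine le_of_forall_pos_le_add fun ε hε => ?_
    obtain ⟨N, hN1, hN⟩ := hf ε hε
    have hfreq : ∃ᶠ n in Filter.atTop,
        ‖f m‖ - ε ≤ ‖f n‖ := by
      rw [Filter.frequently_atTop]
      intro k
      obtain ⟨p, hkp, _, hp⟩ := hN k
      refine ⟨m + p, le_trans hkp (Nat.le_add_left p m), ?_⟩
      have h1 := hp m
      have h2 : ‖f m‖ - ‖f (m + p)‖ ≤
          ‖f m - f (m + p)‖ := norm_sub_norm_le _ _
      rw [show f m - f (m + p) = -(f (m + p) - f m) by ring, norm_neg] at h2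
      linarith
    have := Filter.le_limsup_of_frequently_le hfreq hbu
    linarith
end

section
/- Let K ≥ 1, let θ₁, …, θ_K ∈ ℂ with |θ_k| = 1 for all k and such that for all k ≠ j the ratio θ_k/θ_j is not a root of unity, and let a₁, …, a_K ∈ ℂ with at least one a_k ≠ 0. Then limsup_{n→∞} |Σ_{k=1}^{K} a_k θ_k^n| > 0. -/
open Filter Finset Complex

/-- If `θ₁, …, θ_K` are unimodular complex numbers no ratio of which (for distinct
indices) is a root of unity, and not all `a_k` vanish, then
`limsup_n |∑ k, a_k θ_k^n| > 0`. -/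
theorem limsup_unimodular_exponential_sum_pos (K : ℕ) (hK : 1 ≤ K)
    (θ : Fin K → ℂ) (hθ : ∀ k, ‖θ k‖ = 1)
    (hratio : ∀ k j, k ≠ j → ∀ m : ℕ, 1 ≤ m → (θ k / θ j) ^ m ≠ 1)
    (a : Fin K → ℂ) (ha : ∃ k, a k ≠ 0) :
    0 < Filter.limsup (fun n : ℕ => ‖∑ k, a k * θ k ^ n‖) Filter.atTop := by
  obtain ⟨k₀, hk₀⟩ := ha
  set S : ℕ → ℂ := fun n => ∑ k, a k * θ k ^ n with hSdef
  set u : ℕ → ℝ := fun n => ‖S n‖ with hudef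
  have hθ0 : ∀ k, θ k ≠ 0 := by
    intro k h
    have := hθ k
    rw [h] at this
    simp at this
  have hbound : ∀ n, u n ≤ ∑ k, ‖a k‖ := by
    intro n
    calc ‖S n‖ ≤ ∑ k, ‖a k * θ k ^ n‖ :=
          norm_sum_le _ _
      _ = ∑ k, ‖a k‖ := by
          refine Finset.sum_congr rfl fun k _ => ?_
          rw [norm_mul, norm_pow, hθ k, one_pow, mul_one]
  by_contra hcon
  push_neg at hcon
  have hBddAbove : IsBoundedUnder (· ≤ ·) atTop u :=
    Filter.isBoundedUnder_of ⟨_, hbound⟩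
  have hBddBelow : IsBoundedUnder (· ≥ ·) atTop u :=
    Filter.isBoundedUnder_of ⟨0, fun n => norm_nonneg _⟩
  have hliminf : liminf u atTop = 0 := le_antisymm
    (le_trans (liminf_le_limsup hBddAbove hBddBelow) hcon)
    (le_liminf_of_le hBddAbove.isCoboundedUnder_ge
      (Filter.Eventually.of_forall fun n => norm_nonneg _))
  have hlimsup : limsup u atTop = 0 := le_antisymm hcon
    (hliminf ▸ liminf_le_limsup hBddAbove hBddBelow)
  have hu0 : Tendsto u atTop (nhds 0) :=
    tendsto_of_liminf_eq_limsup hliminf hlimsup hBddAbove hBddBelow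
  -- the twisted sequence tends to 0
  set w : ℂ := (θ k₀)⁻¹ with hwdef
  have hw : ‖w‖ = 1 := by rw [hwdef, norm_inv, hθ, inv_one]
  set v : ℕ → ℂ := fun n => S n * w ^ n with hvdef
  have hv0 : Tendsto v atTop (nhds 0) := by
    rw [tendsto_zero_iff_norm_tendsto_zero]
    have h : ∀ n, ‖v n‖ = u n := by
      intro n
      simp only [hvdef, norm_mul, norm_pow, hw, one_pow, mul_one]
      rfl
    simpa only [h] using hu0
  -- Cesàro averages of v tend to 0
  have hc0 : Tendsto (fun N : ℕ => (N⁻¹ : ℝ) • ∑ n ∈ range N, v n) atTop (nhds 0) :=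
    hv0.cesaro_smul
  -- Cesàro averages of v tend to a k₀
  have key : Tendsto (fun N : ℕ => (N⁻¹ : ℝ) • ∑ n ∈ range N, v n) atTop (nhds (a k₀)) := by
    have hswap : ∀ N : ℕ, (N⁻¹ : ℝ) • ∑ n ∈ range N, v n
        = ∑ k, a k * ((N : ℂ)⁻¹ * ∑ n ∈ range N, (θ k * w) ^ n) := by
      intro N
      rw [Finset.smul_sum]
      simp only [hvdef, hSdef, Finset.sum_mul, Finset.smul_sum]
      rw [Finset.sum_comm]
      refine Finset.sum_congr rfl fun k _ => ?_
      rw [Finset.mul_sum, Finset.mul_sum]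
      refine Finset.sum_congr rfl fun n _ => ?_
      rw [mul_pow, Complex.real_smul]
      push_cast
      ring
    simp only [hswap]
    have hterm : ∀ k, Tendsto (fun N : ℕ => a k * ((N : ℂ)⁻¹ * ∑ n ∈ range N, (θ k * w) ^ n))
        atTop (nhds (a k * (if k = k₀ then 1 else 0))) := by
      intro k
      refine Tendsto.const_mul _ ?_
      by_cases hk : k = k₀
      · simp only [if_pos hk]
        have hone : θ k * w = 1 := by
          rw [hk, hwdef]; exact mul_inv_cancel₀ (hθ0 k₀)
        have hgeq : ∀ N : ℕ, 1 ≤ N → (N : ℂ)⁻¹ * ∑ n ∈ range N, (θ k * w) ^ n = 1 := by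
          intro N hN
          rw [hone]
          simp only [one_pow, Finset.sum_const, Finset.card_range, nsmul_eq_mul, mul_one]
          exact inv_mul_cancel₀ (Nat.cast_ne_zero.mpr (by omega))
        refine Tendsto.congr' ?_ tendsto_const_nhds
        filter_upwards [Filter.eventually_ge_atTop 1] with N hN
        exact (hgeq N hN).symm
      · simp only [if_neg hk]
        set r : ℂ := θ k * w with hrdef
        have hr1 : r ≠ 1 := by
          intro h
          have := hratio k k₀ hk 1 le_rfl
          apply this
          rw [pow_one, div_eq_mul_inv]
          exact h
        have hrabs : ‖r‖ = 1 := by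
          rw [hrdef, norm_mul, hθ, hw, mul_one]
        have hbnd : ∀ N : ℕ, ‖(N : ℂ)⁻¹ * ∑ n ∈ range N, r ^ n‖
            ≤ (N : ℝ)⁻¹ * (2 / ‖r - 1‖) := by
          intro N
          rw [norm_mul, norm_inv, Complex.norm_natCast]
          refine mul_le_mul_of_nonneg_left ?_ (by positivity)
          rw [geom_sum_eq hr1, norm_div]
          have hden : 0 < ‖r - 1‖ :=
            norm_pos_iff.mpr (sub_ne_zero_of_ne hr1)
          have hnum : ‖r ^ N - 1‖ ≤ 2 := by
            calc ‖r ^ N - 1‖ ≤ ‖r ^ N‖ + ‖(1 : ℂ)‖ :=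
                norm_sub_le _ _
              _ = 2 := by rw [norm_pow, hrabs, one_pow, norm_one]; norm_num
          exact div_le_div_of_nonneg_right hnum hden.le
        refine squeeze_zero_norm hbnd ?_
        have := tendsto_inv_atTop_nhds_zero_nat.mul_const (2 / ‖r - 1‖)
        simpa using this
    have := tendsto_finset_sum Finset.univ (fun k _ => hterm k)
    simpa [Finset.sum_ite_eq' Finset.univ k₀ (fun k => a k * 1), mul_ite, mul_one, mul_zero]
      using this
  exact hk₀ (tendsto_nhds_unique key hc0)
end

section
/- Let A be a complex m×m matrix that is a direct sum of Jordan blocks, each of whose eigenvalues has modulus |α| for some fixed nonzero α ∈ ℂ, and let J̄ be the largest size among these Jordan blocks. Then there exists a constant c > 0 such that for all integers T ≥ 1 and all vectors v ∈ ℂ^m, ‖A^T v‖ ≥ c · |α|^T · T^(1−J̄) · ‖v‖. -/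
open Matrix

/-- The Jordan block of order `J` with eigenvalue `α`: `α` on the main diagonal,
`1` on the superdiagonal and `0` elsewhere. -/
def jordanBlock (J : ℕ) (α : ℂ) : Matrix (Fin J) (Fin J) ℂ :=
  Matrix.of fun i j =>
    if (i : ℕ) = (j : ℕ) then α else if (i : ℕ) + 1 = (j : ℕ) then 1 else 0

lemma jordanBlock_zero_pow (J k : ℕ) :
    (jordanBlock J 0) ^ k =
      Matrix.of (fun i j : Fin J => if (i : ℕ) + k = (j : ℕ) then 1 else 0) := by
  induction k with
  | zero =>
    ext i j
    simp [Matrix.one_apply, Fin.ext_iff, eq_comm]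
  | succ k ih =>
    rw [pow_succ, ih]
    ext i j
    rw [Matrix.mul_apply]
    by_cases hij : (i : ℕ) + (k + 1) = (j : ℕ)
    · have hl : (i : ℕ) + k < J := by omega
      rw [Finset.sum_eq_single_of_mem (⟨(i : ℕ) + k, hl⟩ : Fin J) (Finset.mem_univ _)
        (fun l _ hl' => by
          have hne : ¬ ((i : ℕ) + k = (l : ℕ)) := fun h => hl' (Fin.ext h.symm)
          simp [jordanBlock, hne])]
      have h2 : ¬ (((i : ℕ) + k) = (j : ℕ)) := by omega
      have h3 : ((i : ℕ) + k) + 1 = (j : ℕ) := by omega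
      simp [jordanBlock, h2, h3, hij]
    · rw [Matrix.of_apply, if_neg hij]
      refine Finset.sum_eq_zero fun l _ => ?_
      simp only [Matrix.of_apply, jordanBlock]
      by_cases h1 : (i : ℕ) + k = (l : ℕ)
      · have h2 : ¬ ((l : ℕ) + 1 = (j : ℕ)) := by omega
        by_cases h3 : (l : ℕ) = (j : ℕ) <;> simp [h1, h2, h3]
      · simp [h1]

lemma jordanBlock_zero_pow_self (J : ℕ) : (jordanBlock J 0) ^ J = 0 := by
  rw [jordanBlock_zero_pow]
  ext i j
  have : ¬ ((i : ℕ) + J = (j : ℕ)) := by omega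
  simp [this]

lemma jordanBlock_eq_smul (J : ℕ) (lam : ℂ) (h : lam ≠ 0) :
    jordanBlock J lam = lam • (1 + lam⁻¹ • jordanBlock J 0) := by
  ext i j
  simp only [jordanBlock, Matrix.smul_apply, Matrix.add_apply, Matrix.one_apply,
    Matrix.of_apply, smul_eq_mul]
  by_cases hij : (i : ℕ) = (j : ℕ)
  · have hij' : i = j := Fin.ext hij
    subst hij'
    simp
  · have hne : i ≠ j := fun h' => hij (by rw [h'])
    by_cases h2 : (i : ℕ) + 1 = (j : ℕ)
    · simp [hij, hne, h2, mul_inv_cancel₀ h]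
    · simp [hij, hne, h2]

lemma diag_clm_norm_le {ι : Type*} [Fintype ι] [DecidableEq ι] (w : ι → ℂ) (C : ℝ)
    (hC : 0 ≤ C) (h : ∀ p, ‖w p‖ ≤ C) :
    ‖Matrix.toEuclideanCLM (𝕜 := ℂ) (Matrix.diagonal w)‖ ≤ C := by
  refine ContinuousLinearMap.opNorm_le_bound _ hC fun x => ?_
  have hx : ∀ p, (Matrix.toEuclideanCLM (𝕜 := ℂ) (Matrix.diagonal w) x) p = w p * x p := by
    intro p
    have h0 := Matrix.ofLp_toEuclideanCLM (𝕜 := ℂ) (Matrix.diagonal w) x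
    have := congrFun h0 p
    simpa [Matrix.mulVec_diagonal] using this
  rw [EuclideanSpace.norm_eq, EuclideanSpace.norm_eq]
  have hle : ∑ p, ‖(Matrix.toEuclideanCLM (𝕜 := ℂ) (Matrix.diagonal w) x) p‖ ^ 2
      ≤ ∑ p, C ^ 2 * ‖x p‖ ^ 2 := by
    refine Finset.sum_le_sum fun p _ => ?_
    rw [hx p]
    have h1 : ‖w p * x p‖ = ‖w p‖ * ‖x p‖ := by
      rw [norm_mul]
    rw [h1, mul_pow]
    have habs2 : ‖w p‖ ^ 2 ≤ C ^ 2 :=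
      pow_le_pow_left₀ (norm_nonneg _) (h p) 2
    exact mul_le_mul_of_nonneg_right habs2 (sq_nonneg _)
  calc Real.sqrt (∑ p, ‖(Matrix.toEuclideanCLM (𝕜 := ℂ) (Matrix.diagonal w) x) p‖ ^ 2)
      ≤ Real.sqrt (∑ p, C ^ 2 * ‖x p‖ ^ 2) := Real.sqrt_le_sqrt hle
    _ = C * Real.sqrt (∑ p, ‖x p‖ ^ 2) := by
        rw [← Finset.mul_sum, Real.sqrt_mul (sq_nonneg C), Real.sqrt_sq hC]

set_option maxHeartbeats 1000000 in
/-- Let `A` be a direct sum of Jordan blocks whose eigenvalues all have modulus `|α|`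
(`α ≠ 0`), and let `J̄` be the largest size among the blocks. Then there is `c > 0` such
that `‖A^T v‖ ≥ c |α|^T T^(1-J̄) ‖v‖` for all `T ≥ 1` and all vectors `v`. -/
theorem jordan_direct_sum_pow_vec_lower_bound
    (B : ℕ) (hB : 1 ≤ B) (sz : Fin B → ℕ) (hsz : ∀ b, 1 ≤ sz b)
    (α : ℂ) (hα : α ≠ 0) (lam : Fin B → ℂ)
    (hlam : ∀ b, ‖lam b‖ = ‖α‖)
    (Jbar : ℕ) (hJle : ∀ b, sz b ≤ Jbar) (hJmem : ∃ b, sz b = Jbar) :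
    ∃ c : ℝ, 0 < c ∧ ∀ T : ℕ, 1 ≤ T →
      ∀ v : EuclideanSpace ℂ ((b : Fin B) × Fin (sz b)),
        ‖Matrix.toEuclideanLin
            ((Matrix.blockDiagonal' fun b => jordanBlock (sz b) (lam b)) ^ T) v‖ ≥
          c * ‖α‖ ^ T * (T : ℝ) ^ ((1 : ℤ) - (Jbar : ℤ)) * ‖v‖ := by
  classical
  obtain ⟨b₀, hb₀⟩ := hJmem
  have hJbar : 1 ≤ Jbar := hb₀ ▸ hsz b₀
  have habs : (0:ℝ) < ‖α‖ := norm_pos_iff.mpr hα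
  have hlamne : ∀ b, lam b ≠ 0 := by
    intro b hb
    apply hα
    have := hlam b
    rw [hb, norm_zero] at this
    exact norm_eq_zero.mp this.symm
  -- block-level data
  set Mb : ∀ b : Fin B, Matrix (Fin (sz b)) (Fin (sz b)) ℂ :=
    fun b => (lam b)⁻¹ • jordanBlock (sz b) 0 with hMb
  have hMbpow : ∀ b, Mb b ^ Jbar = 0 := by
    intro b
    have h1 : jordanBlock (sz b) 0 ^ Jbar = 0 := by
      have : Jbar = sz b + (Jbar - sz b) := (Nat.add_sub_cancel' (hJle b)).symm
      rw [this, pow_add, jordanBlock_zero_pow_self, zero_mul]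
    rw [hMb, smul_pow, h1, smul_zero]
  have hnegMbpow : ∀ b, (-Mb b) ^ Jbar = 0 := by
    intro b
    rw [neg_pow, hMbpow, mul_zero]
  set Sb : ∀ b : Fin B, Matrix (Fin (sz b)) (Fin (sz b)) ℂ :=
    fun b => ∑ k ∈ Finset.range Jbar, (-Mb b) ^ k with hSb
  have hSbl : ∀ b, Sb b * (1 + Mb b) = 1 := by
    intro b
    have := geom_sum_mul_neg (-Mb b) Jbar
    rw [sub_neg_eq_add, hnegMbpow b, sub_zero] at this
    exact this
  have hSbr : ∀ b, (1 + Mb b) * Sb b = 1 := by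
    intro b
    have := mul_neg_geom_sum (-Mb b) Jbar
    rw [sub_neg_eq_add, hnegMbpow b, sub_zero] at this
    exact this
  have hJf : ∀ b, jordanBlock (sz b) (lam b) = lam b • (1 + Mb b) :=
    fun b => jordanBlock_eq_smul (sz b) (lam b) (hlamne b)
  -- global matrices
  set A : Matrix ((b : Fin B) × Fin (sz b)) ((b : Fin B) × Fin (sz b)) ℂ :=
    Matrix.blockDiagonal' (fun b => jordanBlock (sz b) (lam b)) with hA
  set Ainv : Matrix ((b : Fin B) × Fin (sz b)) ((b : Fin B) × Fin (sz b)) ℂ :=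
    Matrix.blockDiagonal' (fun b => (lam b)⁻¹ • Sb b) with hAinv
  have hblock1 : (fun b => ((lam b)⁻¹ • Sb b) * jordanBlock (sz b) (lam b))
      = (1 : ∀ b : Fin B, Matrix (Fin (sz b)) (Fin (sz b)) ℂ) := by
    funext b
    rw [hJf b, smul_mul_smul_comm, inv_mul_cancel₀ (hlamne b), one_smul, hSbl b]
    rfl
  have hblock2 : (fun b => jordanBlock (sz b) (lam b) * ((lam b)⁻¹ • Sb b))
      = (1 : ∀ b : Fin B, Matrix (Fin (sz b)) (Fin (sz b)) ℂ) := by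
    funext b
    rw [hJf b, smul_mul_smul_comm, mul_inv_cancel₀ (hlamne b), one_smul, hSbr b]
    rfl
  have hAinvA : Ainv * A = 1 := by
    rw [hAinv, hA, ← Matrix.blockDiagonal'_mul, hblock1, Matrix.blockDiagonal'_one]
  have hAAinv : A * Ainv = 1 := by
    rw [hAinv, hA, ← Matrix.blockDiagonal'_mul, hblock2, Matrix.blockDiagonal'_one]
  have hcommA : Commute Ainv A := by
    show Ainv * A = A * Ainv
    rw [hAinvA, hAAinv]
  -- CLM versions
  set φ := Matrix.toEuclideanCLM (𝕜 := ℂ) (n := (b : Fin B) × Fin (sz b)) with hφ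
  -- the diagonal and unipotent parts
  set Dinv : Matrix ((b : Fin B) × Fin (sz b)) ((b : Fin B) × Fin (sz b)) ℂ :=
    Matrix.diagonal (fun p => (lam p.1)⁻¹) with hDinv
  set Smat : Matrix ((b : Fin B) × Fin (sz b)) ((b : Fin B) × Fin (sz b)) ℂ :=
    Matrix.blockDiagonal' Sb with hSmat
  have hDinvBlock : Dinv = Matrix.blockDiagonal'
      (fun b => Matrix.diagonal (fun _ : Fin (sz b) => (lam b)⁻¹)) := by
    rw [hDinv, Matrix.blockDiagonal'_diagonal]
  have hfact : Ainv = Dinv * Smat := by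
    ext ⟨b, i⟩ ⟨b', j⟩
    rw [hAinv, hDinv, hSmat, Matrix.diagonal_mul]
    by_cases hbb : b = b'
    · subst hbb
      by_cases hij : i = j <;>
        simp [Matrix.blockDiagonal'_apply_eq, Matrix.smul_apply, smul_eq_mul]
    · rw [Matrix.blockDiagonal'_apply_ne _ _ _ hbb, Matrix.blockDiagonal'_apply_ne _ _ _ hbb,
        mul_zero]
  have hfact' : Ainv = Smat * Dinv := by
    ext ⟨b, i⟩ ⟨b', j⟩
    rw [hAinv, hDinv, hSmat, Matrix.mul_diagonal]
    by_cases hbb : b = b'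
    · subst hbb
      simp [Matrix.blockDiagonal'_apply_eq, Matrix.smul_apply, smul_eq_mul, mul_comm]
    · rw [Matrix.blockDiagonal'_apply_ne _ _ _ hbb, Matrix.blockDiagonal'_apply_ne _ _ _ hbb,
        zero_mul]
  have hcommDS : Commute (φ Dinv) (φ Smat) := by
    show φ Dinv * φ Smat = φ Smat * φ Dinv
    rw [← _root_.map_mul, ← _root_.map_mul, ← hfact, ← hfact']
  -- nilpotent part in CLM land
  set nC : EuclideanSpace ℂ ((b : Fin B) × Fin (sz b)) →L[ℂ]
      EuclideanSpace ℂ ((b : Fin B) × Fin (sz b)) := φ Smat - 1 with hnC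
  have hSb1 : ∀ b, (Sb b - 1) ^ Jbar = 0 := by
    intro b
    have hsum : Sb b = (∑ k ∈ Finset.range (Jbar - 1), (-Mb b) ^ (k + 1)) + 1 := by
      have h := Finset.sum_range_succ' (fun k => (-Mb b) ^ k) (Jbar - 1)
      rw [show (Jbar - 1) + 1 = Jbar from by omega] at h
      rw [hSb]
      simpa using h
    have hsub : Sb b - 1 = (-Mb b) * ∑ k ∈ Finset.range (Jbar - 1), (-Mb b) ^ k := by
      rw [hsum]
      rw [add_sub_cancel_right, Finset.mul_sum]
      exact Finset.sum_congr rfl fun k _ => (pow_succ' _ _)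
    have hcomm : Commute (-Mb b) (∑ k ∈ Finset.range (Jbar - 1), (-Mb b) ^ k) :=
      Commute.sum_right _ _ _ fun k _ => (Commute.refl (-Mb b)).pow_right k
    rw [hsub, hcomm.mul_pow, hnegMbpow b, zero_mul]
  have hnC0 : nC ^ Jbar = 0 := by
    have h1 : Smat - 1 = Matrix.blockDiagonal' (fun b => Sb b - 1) := by
      have h0 : (fun b : Fin B => Sb b - 1)
          = (Sb - 1 : ∀ b : Fin B, Matrix (Fin (sz b)) (Fin (sz b)) ℂ) := rfl
      rw [h0, Matrix.blockDiagonal'_sub, Matrix.blockDiagonal'_one, hSmat]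
    have h2 : (Smat - 1) ^ Jbar = 0 := by
      rw [h1, ← Matrix.blockDiagonal'_pow]
      have h3 : ((fun b => Sb b - 1) : ∀ b : Fin B, Matrix (Fin (sz b)) (Fin (sz b)) ℂ) ^ Jbar
          = (0 : ∀ b : Fin B, Matrix (Fin (sz b)) (Fin (sz b)) ℂ) := funext fun b => hSb1 b
      rw [h3, Matrix.blockDiagonal'_zero]
    rw [hnC, ← _root_.map_one φ, ← _root_.map_sub, ← _root_.map_pow, h2, _root_.map_zero]
  have hnpow_zero : ∀ m, Jbar ≤ m → nC ^ m = 0 := by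
    intro m hm
    have : m = Jbar + (m - Jbar) := by omega
    rw [this, pow_add, hnC0, zero_mul]
  -- the constant
  set K : ℝ := ∑ k ∈ Finset.range Jbar, ‖nC‖ ^ k with hK
  have hKone : 1 ≤ K := by
    have h0 : (0 : ℕ) ∈ Finset.range Jbar := Finset.mem_range.mpr (by omega)
    have := Finset.single_le_sum (f := fun k => ‖nC‖ ^ k)
      (fun k _ => pow_nonneg (norm_nonneg _) k) h0
    exact le_trans (le_of_eq (pow_zero ‖nC‖).symm) this
  have hKpos : (0:ℝ) < K := lt_of_lt_of_le one_pos hKone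
  refine ⟨K⁻¹, inv_pos.mpr hKpos, ?_⟩
  intro T hT v
  have hTR : (1:ℝ) ≤ (T:ℝ) := by exact_mod_cast hT
  have hTpos : (0:ℝ) < (T:ℝ) := lt_of_lt_of_le one_pos hTR
  -- norm bound on (φ Smat)^T
  have hSnorm : ‖(φ Smat) ^ T‖ ≤ (T:ℝ) ^ (Jbar - 1) * K := by
    have hrw : φ Smat = nC + 1 := by rw [hnC, sub_add_cancel]
    have hexp := (Commute.one_right nC).add_pow T
    rw [← hrw] at hexp
    rw [hexp]
    refine le_trans (norm_sum_le _ _) ?_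
    have hterm : ∀ m ∈ Finset.range (T + 1),
        ‖nC ^ m * 1 ^ (T - m) * (T.choose m : _)‖ ≤
          if m < Jbar then (T:ℝ) ^ (Jbar - 1) * ‖nC‖ ^ m else 0 := by
      intro m _
      rw [one_pow, mul_one]
      by_cases hm : m < Jbar
      · simp only [hm, if_true]
        have h1 : nC ^ m * (T.choose m : _) = (T.choose m) • nC ^ m := by
          rw [← (Nat.cast_commute (T.choose m) (nC ^ m)).eq, nsmul_eq_mul]
        rw [h1]
        refine le_trans norm_nsmul_le ?_
        have h2 : ‖nC ^ m‖ ≤ ‖nC‖ ^ m := by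
          rcases Nat.eq_zero_or_pos m with hm0 | hm0
          · subst hm0
            rw [pow_zero, pow_zero, ContinuousLinearMap.one_def]
            exact ContinuousLinearMap.norm_id_le
          · exact norm_pow_le' nC hm0
        have h3 : (T.choose m : ℝ) ≤ (T:ℝ) ^ m := by
          exact_mod_cast Nat.choose_le_pow T m
        have h4 : (T:ℝ) ^ m ≤ (T:ℝ) ^ (Jbar - 1) :=
          pow_le_pow_right₀ hTR (by omega)
        calc (T.choose m : ℝ) * ‖nC ^ m‖ ≤ (T:ℝ) ^ m * ‖nC‖ ^ m := by
              exact mul_le_mul h3 h2 (norm_nonneg _) (pow_nonneg (le_of_lt hTpos) m)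
          _ ≤ (T:ℝ) ^ (Jbar - 1) * ‖nC‖ ^ m := by
              exact mul_le_mul_of_nonneg_right h4 (pow_nonneg (norm_nonneg _) m)
      · simp only [hm, if_false]
        rw [hnpow_zero m (by omega), zero_mul, norm_zero]
    refine le_trans (Finset.sum_le_sum hterm) ?_
    rw [← Finset.sum_filter]
    have hsub : (Finset.range (T + 1)).filter (· < Jbar) ⊆ Finset.range Jbar := by
      intro m hm
      rw [Finset.mem_filter] at hm
      exact Finset.mem_range.mpr hm.2
    refine le_trans (Finset.sum_le_sum_of_subset_of_nonneg hsub
      (fun m _ _ => mul_nonneg (pow_nonneg (le_of_lt hTpos) _)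
        (pow_nonneg (norm_nonneg _) m))) ?_
    rw [hK, Finset.mul_sum]
  -- norm bound on φ Dinv
  have hDnorm : ‖φ Dinv‖ ≤ ‖α‖⁻¹ := by
    rw [hφ, hDinv]
    refine diag_clm_norm_le _ _ (inv_nonneg.mpr (le_of_lt habs)) fun p => ?_
    rw [norm_inv, hlam p.1]
  -- combine
  have hAinvnorm : ‖(φ Ainv) ^ T‖ ≤ ‖α‖⁻¹ ^ T * ((T:ℝ) ^ (Jbar - 1) * K) := by
    have h1 : φ Ainv = φ Dinv * φ Smat := by rw [← _root_.map_mul, ← hfact]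
    have h2 : (φ Ainv) ^ T = (φ Dinv) ^ T * (φ Smat) ^ T := by
      rw [h1, hcommDS.mul_pow]
    rw [h2]
    refine le_trans (norm_mul_le _ _) ?_
    have h3 : ‖(φ Dinv) ^ T‖ ≤ ‖α‖⁻¹ ^ T := by
      refine le_trans (norm_pow_le' _ (by omega)) ?_
      exact pow_le_pow_left₀ (norm_nonneg _) hDnorm T
    exact mul_le_mul h3 hSnorm (norm_nonneg _) (pow_nonneg (inv_nonneg.mpr (le_of_lt habs)) T)
  -- inversion identity
  have hinvT : (φ Ainv) ^ T * (φ A) ^ T = 1 := by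
    rw [← _root_.map_pow, ← _root_.map_pow, ← _root_.map_mul, ← hcommA.mul_pow, hAinvA,
      one_pow, _root_.map_one]
  have hv : ((φ Ainv) ^ T) (((φ A) ^ T) v) = v := by
    rw [← ContinuousLinearMap.mul_apply, hinvT, ContinuousLinearMap.one_apply]
  have hle : ‖v‖ ≤ (‖α‖⁻¹ ^ T * ((T:ℝ) ^ (Jbar - 1) * K)) * ‖((φ A) ^ T) v‖ := by
    calc ‖v‖ = ‖((φ Ainv) ^ T) (((φ A) ^ T) v)‖ := by rw [hv]
      _ ≤ ‖(φ Ainv) ^ T‖ * ‖((φ A) ^ T) v‖ := ContinuousLinearMap.le_opNorm _ _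
      _ ≤ _ := mul_le_mul_of_nonneg_right hAinvnorm (norm_nonneg _)
  -- identify the goal's vector with ((φ A)^T) v
  have hgoalvec : Matrix.toEuclideanLin (A ^ T) v = ((φ A) ^ T) v := by
    rw [← _root_.map_pow]
    exact (LinearMap.congr_fun (Matrix.coe_toEuclideanCLM_eq_toEuclideanLin (A ^ T)) v).symm
  rw [ge_iff_le, hgoalvec]
  -- arithmetic
  have hzpow : (T:ℝ) ^ ((1 : ℤ) - (Jbar : ℤ)) = ((T:ℝ) ^ (Jbar - 1))⁻¹ := by
    have h1 : ((1 : ℤ) - (Jbar : ℤ)) = -((Jbar - 1 : ℕ) : ℤ) := by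
      have : ((Jbar - 1 : ℕ) : ℤ) = (Jbar : ℤ) - 1 := by
        push_cast [Nat.cast_sub hJbar]
        ring
      omega
    rw [h1, _root_.zpow_neg, zpow_natCast]
  rw [hzpow]
  set P : ℝ := ‖α‖ ^ T with hP
  set Q : ℝ := (T:ℝ) ^ (Jbar - 1) with hQ
  have hPpos : 0 < P := pow_pos habs T
  have hQpos : 0 < Q := pow_pos hTpos _
  have hle' : ‖v‖ ≤ P⁻¹ * (Q * K) * ‖((φ A) ^ T) v‖ := by
    rw [inv_pow] at hle
    exact hle
  have key : K⁻¹ * P * Q⁻¹ * ‖v‖ ≤ K⁻¹ * P * Q⁻¹ * (P⁻¹ * (Q * K) * ‖((φ A) ^ T) v‖) :=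
    mul_le_mul_of_nonneg_left hle' (by positivity)
  refine le_trans key (le_of_eq ?_)
  field_simp
end
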